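/- Let w be a twisted involution and i ∈ B. Then ℓ((s i)* · w · (s i)) = ℓ(w) if and only if (s i)* · w · (s i) = w. -/

import Mathlib

/-!
Common setup: twisted Coxeter systems, involution words, braid/half-braid moves.
-/

noncomputable section
open scoped Classical

namespace TwistedCoxeter

variable {B : Type*} {W : Type*} [Group W] {M : CoxeterMatrix B}

/-- A twisting of a Coxeter system: a group automorphism `auto` of `W` with `auto ∘ auto = id`
together with an involution `star` of the index set, compatible on simple reflections. -/
structure Twisting (cs : CoxeterSystem M W) where
  auto : W →* W
  star : B → B
  auto_auto : ∀ w, auto (auto w) = w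
  star_star : ∀ i, star (star i) = i
  auto_simple : ∀ i, auto (cs.simple i) = cs.simple (star i)

/-- The trivial twisting. -/
def trivialTwisting (cs : CoxeterSystem M W) : Twisting cs where
  auto := MonoidHom.id W
  star := id
  auto_auto _ := rfl
  star_star _ := rfl
  auto_simple _ := rfl

variable {cs : CoxeterSystem M W}

/-- `w` is a twisted involution: `w* = w⁻¹`. -/
def IsTwistedInvolution (t : Twisting cs) (w : W) : Prop := t.auto w = w⁻¹

/-- One step of the recursion defining `iota`. -/
def invStep (t : Twisting cs) (z : W) (i : B) : W :=
  if cs.length (z * cs.simple i) < cs.length z then z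
  else if t.auto (cs.simple i) * z * cs.simple i = z then z * cs.simple i
  else t.auto (cs.simple i) * z * cs.simple i

/-- The twisted involution obtained from a word, via the "demazure-like" recursion
`ι([]) = 1`, `ι(a ++ [i]) = invStep (ι a) i`. -/
def iota (t : Twisting cs) (a : List B) : W := a.foldl (invStep t) 1

/-- `a` is an involution word for `w`: `ι(a) = w` and `a` has minimal length among
all words with this property. -/
def IsInvolutionWord (t : Twisting cs) (w : W) (a : List B) : Prop :=
  iota t a = w ∧ ∀ b : List B, iota t b = w → a.length ≤ b.length

/-- The set `R̂(w)` of involution words for `w`. -/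
def invWords (t : Twisting cs) (w : W) : Set (List B) := {a | IsInvolutionWord t w a}

/-- `ℓ̂(w)`: the minimal length of a word `a` with `ι(a) = w`. -/
def hatLength (t : Twisting cs) (w : W) : ℕ :=
  sInf {n | ∃ a : List B, iota t a = w ∧ a.length = n}

/-- The alternating word `[i, j, i, j, ...]` of length `m` (starting with `i`). -/
def altWord (i j : B) : ℕ → List B
  | 0 => []
  | n + 1 => i :: altWord j i n

/-- Words `a` and `b` differ by a braid move. -/
def BraidMove (M : CoxeterMatrix B) (a b : List B) : Prop :=
  ∃ (u v : List B) (i j : B), i ≠ j ∧ M i j ≠ 0 ∧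
    a = u ++ altWord i j (M i j) ++ v ∧ b = u ++ altWord j i (M i j) ++ v

/-- The quantity `m_*(i,j)`. -/
def mstar (t : Twisting cs) (i j : B) : ℕ :=
  if M i j ≠ 0 ∧ M i j % 2 = 1 ∧ ({t.star i, t.star j} : Set B) = {i, j} then
    (M i j + 1) / 2
  else if M i j ≠ 0 ∧ M i j % 2 = 0 ∧ t.star i = i ∧ t.star j = j then
    M i j / 2 + 1
  else if M i j ≠ 0 ∧ M i j % 2 = 0 ∧ t.star i = j then
    M i j / 2
  else M i j

/-- Words `a` and `b` differ by a half-braid move. -/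
def HalfBraidMove (t : Twisting cs) (a b : List B) : Prop :=
  ∃ (v : List B) (i j : B), i ≠ j ∧ M i j ≠ 0 ∧ mstar t i j < M i j ∧
    a = altWord i j (mstar t i j) ++ v ∧ b = altWord j i (mstar t i j) ++ v

/-- Words `a` and `b` differ by a generalized half-braid move. -/
def GenHalfBraidMove (t : Twisting cs) (a b : List B) : Prop :=
  ∃ (r v : List B) (i j : B) (m : ℕ), i ≠ j ∧ 1 ≤ m ∧
    a = r ++ altWord i j m ++ v ∧ b = r ++ altWord j i m ++ v ∧
    ∃ z : W, IsTwistedInvolution t z ∧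
      IsInvolutionWord t z (r ++ altWord i j m) ∧ IsInvolutionWord t z (r ++ altWord j i m)

/-- `S` is an equivalence class of the equivalence relation on words generated by the
(symmetric) move relation `E`: any two elements of `S` are connected by a finite chain of
moves, and `S` is closed under moves. -/
def IsMoveClass (E : List B → List B → Prop) (S : Set (List B)) : Prop :=
  (∀ a ∈ S, ∀ b ∈ S, Relation.ReflTransGen E a b) ∧
  (∀ a ∈ S, ∀ b, E a b → b ∈ S)

/-- The twisted Coxeter system is perfectly braided if each `R̂(w)`, for `w` a twisted
involution, is an equivalence class of the relation generated by braid moves and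
half-braid moves. -/
def PerfectlyBraided (t : Twisting cs) : Prop :=
  ∀ w : W, IsTwistedInvolution t w →
    IsMoveClass (fun a b => BraidMove M a b ∨ HalfBraidMove t a b) (invWords t w)

end TwistedCoxeter

/-
The proof rests on the exchange condition, obtained from the sign representation: letting each
simple reflection act on `W × ℤˣ` by `(t, ε) ↦ (sᵢ t sᵢ, ±ε)`, with the sign flipped exactly when
`t = sᵢ`, respects the Coxeter relations, so the parity of the number of occurrences of a
reflection in the left inversion sequence of a word depends only on the product of the word.
Hence every left descent `sⱼ` of `π ω` occurs in that sequence. Applied to `u sᵢ` when `sⱼ` is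
not a left descent of `u`, this forces `sⱼ = u sᵢ u⁻¹`, that is `sⱼ u sᵢ = u`.

For a twisted involution `w`, applying `*` and inverting gives `ℓ(sᵢ* w) = ℓ(w sᵢ)`. So if
`ℓ(sᵢ* w sᵢ) = ℓ(w)`, then for `u = w` or `u = sᵢ* w` the reflection `sᵢ*` is a left descent of
`u sᵢ` but not of `u`, and the previous fact yields `sᵢ* w sᵢ = w`.
-/

namespace CoxeterSystem

open List

variable {B W : Type*} [Group W] {M : CoxeterMatrix B} (cs : CoxeterSystem M W)

local prefix:100 "s " => cs.simple
local prefix:100 "π " => cs.wordProd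
local prefix:100 "ℓ " => cs.length
local prefix:100 "lis " => cs.leftInvSeq

theorem conj_simple_conj_simple (i : B) (t : W) :
    MulAut.conj (s i) (MulAut.conj (s i) t) = t := by
  simp [mul_assoc]

theorem conj_simple_self (i : B) : MulAut.conj (s i) (s i) = s i := by
  simp [MulAut.conj_apply]

theorem conj_simple_eq_simple_iff (i : B) (t : W) :
    MulAut.conj (s i) t = s i ↔ t = s i := by
  constructor
  · intro h
    rw [← conj_simple_conj_simple cs i t, h, conj_simple_self]
  · rintro rfl
    exact conj_simple_self cs i

def signPerm (i : B) : Equiv.Perm (W × ℤˣ) :=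
  Function.Involutive.toPerm
    (fun p => (MulAut.conj (s i) p.1, if p.1 = s i then -p.2 else p.2))
    (by
      rintro ⟨t, ε⟩
      by_cases ht : t = s i
      · simp only [ht, conj_simple_self, if_true, neg_neg]
      · simp only [ht, conj_simple_conj_simple, conj_simple_eq_simple_iff, if_false])

theorem signPerm_apply (i : B) (t : W) (ε : ℤˣ) :
    cs.signPerm i (t, ε) = (MulAut.conj (s i) t, if t = s i then -ε else ε) := rfl

theorem count_leftInvSeq_cons_conj_simple (i : B) (ω : List B) (t : W) :
    (lis (i :: ω)).count (MulAut.conj (s i) t) =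
      (lis ω).count t + if t = s i then 1 else 0 := by
  rw [leftInvSeq, count_cons, count_map_of_injective _ _ (MulAut.conj (s i)).injective]
  simp only [beq_iff_eq, eq_comm (a := s i), conj_simple_eq_simple_iff]

theorem prod_map_signPerm_apply (ω : List B) (t : W) (ε : ℤˣ) :
    (ω.map cs.signPerm).prod (t, ε) =
      (MulAut.conj (π ω) t, (-1) ^ (lis ω).count (MulAut.conj (π ω) t) * ε) := by
  induction ω generalizing t ε with
  | nil => simp
  | cons i ω ih =>
    rw [map_cons, prod_cons, Equiv.Perm.mul_apply, ih, signPerm_apply, wordProd_cons, map_mul,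
      MulAut.mul_apply, count_leftInvSeq_cons_conj_simple]
    by_cases ht : MulAut.conj (π ω) t = s i
    · simp only [ht, if_true, pow_succ, mul_neg_one, neg_mul]
    · simp only [ht, if_false, add_zero]

theorem alternatingWord_two_mul_succ (i j : B) (p : ℕ) :
    alternatingWord i j (2 * (p + 1)) = i :: j :: alternatingWord i j (2 * p) := by
  rw [show 2 * (p + 1) = 2 * p + 1 + 1 by ring, alternatingWord_succ', alternatingWord_succ']
  simp

theorem prod_map_alternatingWord_two_mul {G : Type*} [Monoid G] (f : B → G) (i j : B) (p : ℕ) :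
    ((alternatingWord i j (2 * p)).map f).prod = (f i * f j) ^ p := by
  induction p with
  | zero => simp [alternatingWord]
  | succ p ih =>
    rw [alternatingWord_two_mul_succ, map_cons, map_cons, prod_cons, prod_cons, ih, pow_succ',
      mul_assoc]

theorem leftInvSeq_alternatingWord_two_mul (i j : B) (p : ℕ) :
    lis (alternatingWord i j (2 * p)) = (range (2 * p)).map fun k => s i * (s j * s i) ^ k := by
  refine ext_getElem (by simp) fun k hk _ => ?_
  rw [getElem_leftInvSeq_alternatingWord cs i j p k (by simpa using hk), getElem_map,
    getElem_range, prod_alternatingWord_eq_mul_pow]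
  simp [Nat.add_div_of_dvd_right]

theorem even_count_map_range_two_mul {α : Type*} [BEq α] (f : ℕ → α) {m : ℕ}
    (hf : ∀ k, f (m + k) = f k) (a : α) : Even (((range (2 * m)).map f).count a) := by
  have hshift : f ∘ (m + ·) = f := funext hf
  rw [two_mul, range_add, map_append, count_append, map_map, hshift]
  exact ⟨_, rfl⟩

theorem isLiftable_signPerm : M.IsLiftable cs.signPerm := by
  intro i j
  have hπ : π (alternatingWord i j (2 * M i j)) = 1 := by
    rw [prod_alternatingWord_eq_mul_pow]
    simp
  have hperiodic : ∀ k, s i * (s j * s i) ^ (M i j + k) = s i * (s j * s i) ^ k := by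
    simp [pow_add]
  rw [← prod_map_alternatingWord_two_mul]
  ext1 ⟨t, ε⟩
  rw [prod_map_signPerm_apply, hπ, map_one, MulAut.one_apply,
    leftInvSeq_alternatingWord_two_mul, (even_count_map_range_two_mul _ hperiodic t).neg_one_pow,
    one_mul]
  rfl

theorem lift_signPerm_wordProd (ω : List B) :
    cs.lift ⟨cs.signPerm, cs.isLiftable_signPerm⟩ (π ω) = (ω.map cs.signPerm).prod := by
  rw [wordProd, map_list_prod, map_map]
  exact congrArg prod (map_congr_left fun i _ => cs.lift_apply_simple cs.isLiftable_signPerm i)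

theorem neg_one_pow_count_leftInvSeq_eq {ω ω' : List B} (h : π ω = π ω') (t : W) :
    (-1 : ℤˣ) ^ (lis ω).count t = (-1) ^ (lis ω').count t := by
  have hprod : (ω.map cs.signPerm).prod = (ω'.map cs.signPerm).prod := by
    rw [← lift_signPerm_wordProd, ← lift_signPerm_wordProd, h]
  have := congrArg (fun f : Equiv.Perm (W × ℤˣ) => (f ((MulAut.conj (π ω)).symm t, 1)).2) hprod
  simpa only [prod_map_signPerm_apply, h, MulEquiv.apply_symm_apply, mul_one] using this

theorem simple_mem_leftInvSeq_of_isLeftDescent {ω : List B} {j : B}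
    (h : cs.IsLeftDescent (π ω) j) : s j ∈ lis ω := by
  obtain ⟨ω', hω', hω'_eq⟩ := cs.exists_isReduced (s j * π ω)
  have hprod : π (j :: ω') = π ω := by
    rw [wordProd_cons, ← hω'_eq, simple_mul_simple_cancel_left]
  have hnotMem : s j ∉ lis ω' := fun hmem => by
    have hlt := (cs.isLeftInversion_of_mem_leftInvSeq hω' hmem).2
    rw [← hω'_eq, simple_mul_simple_cancel_left] at hlt
    exact h.asymm hlt
  have hcount : (lis (j :: ω')).count (s j) = 1 := by
    rw [← conj_simple_self cs j, count_leftInvSeq_cons_conj_simple, count_eq_zero.mpr hnotMem]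
    simp
  have hparity := cs.neg_one_pow_count_leftInvSeq_eq hprod (s j)
  by_contra hmem
  rw [hcount, count_eq_zero.mpr hmem] at hparity
  norm_num at hparity

theorem simple_mul_mul_simple_eq_of_isLeftDescent {u : W} {i j : B}
    (hj : ¬cs.IsLeftDescent u j) (h : cs.IsLeftDescent (u * s i) j) : s j * u * s i = u := by
  obtain ⟨ω, hω, rfl⟩ := cs.exists_isReduced u
  have hmem := cs.simple_mem_leftInvSeq_of_isLeftDescent (ω := ω.concat i)
    (by rwa [wordProd_concat])
  rw [leftInvSeq_concat, concat_eq_append, mem_append, mem_singleton] at hmem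
  rcases hmem with hmem | hmem
  · exact absurd (cs.isLeftInversion_of_mem_leftInvSeq hω hmem).2 hj
  · rw [hmem, inv_mul_cancel_right, simple_mul_simple_cancel_right]

theorem simple_mul_mul_simple_eq_of_length_eq {w : W} {i j : B}
    (h : ℓ (s j * w) = ℓ (w * s i)) (hw : ℓ (s j * w * s i) = ℓ w) : s j * w * s i = w := by
  rcases cs.length_mul_simple w i with hi | hi
  · refine cs.simple_mul_mul_simple_eq_of_isLeftDescent ?_ ?_
    · rw [not_isLeftDescent_iff, h, hi]
    · rw [IsLeftDescent, ← mul_assoc, hw, hi]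
      omega
  · have hsw : s j * (s j * w) * s i = s j * w := by
      refine cs.simple_mul_mul_simple_eq_of_isLeftDescent ?_ ?_
      · rw [not_isLeftDescent_iff, simple_mul_simple_cancel_left]
        omega
      · rw [IsLeftDescent, ← mul_assoc, simple_mul_simple_cancel_left, hw]
        omega
    rw [simple_mul_simple_cancel_left] at hsw
    rw [← hsw, simple_mul_simple_cancel_right]

end CoxeterSystem

namespace TwistedCoxeter

section

variable {B W : Type*} [Group W] {M : CoxeterMatrix B} {cs : CoxeterSystem M W}

theorem Twisting.auto_wordProd (t : Twisting cs) (ω : List B) :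
    t.auto (cs.wordProd ω) = cs.wordProd (ω.map t.star) := by
  rw [CoxeterSystem.wordProd, map_list_prod, List.map_map, CoxeterSystem.wordProd, List.map_map]
  exact congrArg List.prod (List.map_congr_left fun i _ => t.auto_simple i)

theorem Twisting.length_auto_le (t : Twisting cs) (w : W) :
    cs.length (t.auto w) ≤ cs.length w := by
  obtain ⟨ω, hω, rfl⟩ := cs.exists_isReduced w
  calc cs.length (t.auto (cs.wordProd ω)) ≤ (ω.map t.star).length := by
        rw [t.auto_wordProd]
        exact cs.length_wordProd_le _
    _ = cs.length (cs.wordProd ω) := by rw [List.length_map, hω.eq]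

theorem Twisting.length_auto (t : Twisting cs) (w : W) : cs.length (t.auto w) = cs.length w :=
  le_antisymm (t.length_auto_le w) (by simpa only [t.auto_auto] using t.length_auto_le (t.auto w))

theorem IsTwistedInvolution.length_auto_simple_mul {t : Twisting cs} {w : W}
    (hw : IsTwistedInvolution t w) (i : B) :
    cs.length (t.auto (cs.simple i) * w) = cs.length (w * cs.simple i) := by
  calc cs.length (t.auto (cs.simple i) * w) = cs.length (t.auto (cs.simple i * w⁻¹)) := by
        rw [map_mul, map_inv, hw, inv_inv]
    _ = cs.length (w * cs.simple i) := by
        rw [t.length_auto, ← cs.length_inv, mul_inv_rev, inv_inv, cs.inv_simple]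

end

/-- For a twisted involution `w` and `i ∈ B`, one has
`ℓ((s i)* * w * (s i)) = ℓ(w)` if and only if `(s i)* * w * (s i) = w`. -/
theorem statement_0 {B W : Type*} [Group W] {M : CoxeterMatrix B} {cs : CoxeterSystem M W}
    (t : Twisting cs) (w : W) (hw : IsTwistedInvolution t w) (i : B) :
    cs.length (t.auto (cs.simple i) * w * cs.simple i) = cs.length w ↔
      t.auto (cs.simple i) * w * cs.simple i = w := by
  refine ⟨fun h => ?_, fun h => by rw [h]⟩
  have hsym := hw.length_auto_simple_mul i
  rw [t.auto_simple] at h hsym ⊢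
  exact cs.simple_mul_mul_simple_eq_of_length_eq hsym h

end TwistedCoxeter
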